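/- Let X ~ P with law of T°(X) continuous, and let T_n be random functions (depending on auxiliary data D_n independent of X) with T_n(X) → T°(X) in probability. Define π_n(x) := F̂_n(T_n(x)) where F̂_n is the empirical survival function of T°(Z_1),...,T°(Z_N) with Z_i i.i.d. ~ P independent of X, N = N(n) → ∞. Then π_n(X) → π°(X) := F(T°(X)) in probability, where F(r) = P(T° ≥ r). -/

import Mathlib

open MeasureTheory ProbabilityTheory Filter Set Topology

/-!
Let `H` be the survival function of `T°(X)`. At each fixed `r` the empirical survival function
converges to `H r` by the strong law of large numbers. Since `H` is continuous, antitone and runs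
from `1` to `0`, finitely many points `S` bracket every `r` up to `δ`, and monotonicity of the
empirical survival function turns convergence on `S` into uniform convergence in probability
(Glivenko–Cantelli). Finally `F̂ₙ(Tₙ) - H(Tₙ)` is small by uniformity and `H(Tₙ) → H(T°(X))` by
continuity of `H`.
-/

/-- Every point is squeezed between two points of `S` at which `H` differs by at most `δ`,
except in the tails, where `H` is already within `δ` of `1` (on the left) or `0` (on the right). -/
def IsBracketing (H : ℝ → ℝ) (δ : ℝ) (S : Finset ℝ) : Prop :=
  ∀ r, (1 - δ ≤ H r ∨ ∃ s ∈ S, s ≤ r ∧ H s ≤ H r + δ) ∧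
    (H r ≤ δ ∨ ∃ t ∈ S, r ≤ t ∧ H r ≤ H t + δ)

-- Cut `[a, b]` where `H` has dropped by exactly `δ` (intermediate value theorem) and recurse.
lemma exists_finset_bracketing_Icc {H : ℝ → ℝ} (hc : Continuous H) {δ : ℝ} (hδ : 0 ≤ δ) (K : ℕ)
    {a b : ℝ} (hab : a ≤ b) (hK : H a - H b ≤ K * δ) :
    ∃ S : Finset ℝ, a ∈ S ∧ b ∈ S ∧
      ∀ r ∈ Icc a b, ∃ s ∈ S, ∃ t ∈ S, s ≤ r ∧ r ≤ t ∧ H s ≤ H t + δ := by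
  have pair (a : ℝ) (hsmall : H a ≤ H b + δ) : ∃ S : Finset ℝ, a ∈ S ∧ b ∈ S ∧
      ∀ r ∈ Icc a b, ∃ s ∈ S, ∃ t ∈ S, s ≤ r ∧ r ≤ t ∧ H s ≤ H t + δ :=
    ⟨{a, b}, by simp, by simp, fun r hr => ⟨a, by simp, b, by simp, hr.1, hr.2, hsmall⟩⟩
  induction K generalizing a with
  | zero => exact pair a (by simp only [Nat.cast_zero, zero_mul] at hK; linarith)
  | succ K ih =>
    by_cases hsmall : H a ≤ H b + δ
    · exact pair a hsmall
    obtain ⟨c, ⟨-, hcb⟩, hHc⟩ : ∃ c ∈ Icc a b, H c = H a - δ :=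
      intermediate_value_Icc' hab hc.continuousOn ⟨by linarith, by linarith⟩
    obtain ⟨S, hcS, hbS, hS⟩ := ih hcb (by push_cast at hK; linarith)
    refine ⟨insert a S, Finset.mem_insert_self a S, Finset.mem_insert_of_mem hbS, fun r hr => ?_⟩
    rcases le_total r c with hrc | hcr
    · exact ⟨a, Finset.mem_insert_self a S, c, Finset.mem_insert_of_mem hcS, hr.1, hrc, by linarith⟩
    · obtain ⟨s, hs, t, ht, hsr, hrt, hst⟩ := hS r ⟨hcr, hr.2⟩
      exact ⟨s, Finset.mem_insert_of_mem hs, t, Finset.mem_insert_of_mem ht, hsr, hrt, hst⟩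

lemma exists_isBracketing {H : ℝ → ℝ} (hH : Antitone H) (hc : Continuous H)
    (hbot : Tendsto H atBot (𝓝 1)) (htop : Tendsto H atTop (𝓝 0)) {δ : ℝ} (hδ : 0 < δ) :
    ∃ S, IsBracketing H δ S := by
  obtain ⟨a, ha⟩ := (hbot.eventually (Ioi_mem_nhds (by linarith : 1 - δ < 1))).exists
  obtain ⟨b, hb, hab⟩ := ((htop.eventually (Iio_mem_nhds hδ)).and (eventually_ge_atTop a)).exists
  obtain ⟨K, hK⟩ := exists_nat_ge (1 / δ)
  have hKδ : 1 ≤ K * δ := by rwa [div_le_iff₀ hδ] at hK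
  obtain ⟨S, haS, hbS, hS⟩ := exists_finset_bracketing_Icc hc hδ.le K hab
    (by linarith [hH.ge_of_tendsto hbot a, hH.le_of_tendsto htop b])
  refine ⟨S, fun r => ?_⟩
  rcases lt_or_ge r a with hra | har
  · exact ⟨Or.inl (by linarith [hH hra.le]),
      Or.inr ⟨a, haS, hra.le, by linarith [hH.ge_of_tendsto hbot r]⟩⟩
  rcases le_or_gt r b with hrb | hbr
  · obtain ⟨s, hs, t, ht, hsr, hrt, hst⟩ := hS r ⟨har, hrb⟩
    exact ⟨Or.inr ⟨s, hs, hsr, by linarith [hH hrt]⟩, Or.inr ⟨t, ht, hrt, by linarith [hH hsr]⟩⟩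
  · exact ⟨Or.inr ⟨b, hbS, hbr.le, by linarith [hH.le_of_tendsto htop r]⟩,
      Or.inl (by linarith [hH hbr.le])⟩

lemma IsBracketing.abs_sub_le {H G : ℝ → ℝ} {δ η : ℝ} {S : Finset ℝ} (hS : IsBracketing H δ S)
    (hG : Antitone G) (hG0 : ∀ r, 0 ≤ G r) (hG1 : ∀ r, G r ≤ 1) (hη : 0 ≤ η)
    (hGH : ∀ s ∈ S, |G s - H s| ≤ η) (r : ℝ) : |G r - H r| ≤ η + δ := by
  obtain ⟨hlo, hhi⟩ := hS r
  rw [abs_sub_le_iff]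
  constructor
  · rcases hlo with h | ⟨s, hs, hsr, hHs⟩
    · linarith [hG1 r]
    · linarith [hG hsr, (abs_sub_le_iff.1 (hGH s hs)).1]
  · rcases hhi with h | ⟨t, ht, hrt, hHt⟩
    · linarith [hG0 r]
    · linarith [hG hrt, (abs_sub_le_iff.1 (hGH t ht)).2]

section UniformConvergenceInMeasure

variable {Ω ι α E : Type*} [MeasurableSpace Ω] [PseudoMetricSpace E] {P : Measure Ω} {l : Filter ι}

/-- The event need not be measurable; `P` is then evaluated as an outer measure. -/
def TendstoUniformlyInMeasure (P : Measure Ω) (Φ : ι → Ω → α → E) (l : Filter ι) (H : α → E) :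
    Prop :=
  ∀ ε > 0, Tendsto (fun i => P {ω | ∃ r, ε ≤ dist (Φ i ω r) (H r)}) l (𝓝 0)

lemma TendstoUniformlyInMeasure.tendstoInMeasure_comp {Φ : ι → Ω → α → E} {H : α → E}
    (hΦ : TendstoUniformlyInMeasure P Φ l H) {Y : ι → Ω → α} {Y' : Ω → α}
    (hY : TendstoInMeasure P (fun i ω => H (Y i ω)) l (fun ω => H (Y' ω))) :
    TendstoInMeasure P (fun i ω => Φ i ω (Y i ω)) l (fun ω => H (Y' ω)) := by
  rw [tendstoInMeasure_iff_dist] at hY ⊢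
  intro ε hε
  have hsub (i : ι) : {ω | ε ≤ dist (Φ i ω (Y i ω)) (H (Y' ω))} ⊆
      {ω | ∃ r, ε / 2 ≤ dist (Φ i ω r) (H r)} ∪ {ω | ε / 2 ≤ dist (H (Y i ω)) (H (Y' ω))} := by
    intro ω hω
    by_contra h
    simp only [mem_union, mem_ofPred_eq, not_or, not_exists, not_le] at h hω
    linarith [h.1 (Y i ω), dist_triangle (Φ i ω (Y i ω)) (H (Y i ω)) (H (Y' ω))]
  have hlim := (hΦ (ε / 2) (half_pos hε)).add (hY (ε / 2) (half_pos hε))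
  rw [add_zero] at hlim
  exact tendsto_of_tendsto_of_tendsto_of_le_of_le tendsto_const_nhds hlim (fun i => zero_le)
    fun i => (measure_mono (hsub i)).trans (measure_union_le _ _)

-- Pólya's theorem, for convergence in measure.
theorem tendstoUniformlyInMeasure_of_antitone {Φ : ι → Ω → ℝ → ℝ} {H : ℝ → ℝ}
    (hΦ : ∀ i ω, Antitone (Φ i ω)) (hΦ0 : ∀ i ω r, 0 ≤ Φ i ω r) (hΦ1 : ∀ i ω r, Φ i ω r ≤ 1)
    (hH : Antitone H) (hc : Continuous H)
    (hbot : Tendsto H atBot (𝓝 1)) (htop : Tendsto H atTop (𝓝 0))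
    (hpt : ∀ r, TendstoInMeasure P (fun i ω => Φ i ω r) l (fun _ => H r)) :
    TendstoUniformlyInMeasure P Φ l H := by
  intro ε hε
  obtain ⟨S, hS⟩ := exists_isBracketing hH hc hbot htop (by positivity : 0 < ε / 3)
  have hsub (i : ι) : {ω | ∃ r, ε ≤ dist (Φ i ω r) (H r)} ⊆
      ⋃ s ∈ S, {ω | ε / 3 ≤ dist (Φ i ω s) (H s)} := by
    rintro ω ⟨r, hr⟩
    by_contra h
    simp only [mem_iUnion, mem_ofPred_eq, not_exists, not_le] at h
    have := hS.abs_sub_le (hΦ i ω) (hΦ0 i ω) (hΦ1 i ω) (by positivity)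
      (fun s hs => (h s hs).le) r
    rw [Real.dist_eq] at hr
    linarith
  have hlim : Tendsto (fun i => ∑ s ∈ S, P {ω | ε / 3 ≤ dist (Φ i ω s) (H s)}) l (𝓝 0) := by
    simpa using tendsto_finsetSum S fun s _ =>
      tendstoInMeasure_iff_dist.1 (hpt s) (ε / 3) (by positivity)
  exact tendsto_of_tendsto_of_tendsto_of_le_of_le tendsto_const_nhds hlim (fun i => zero_le)
    fun i => (measure_mono (hsub i)).trans (measure_biUnion_finset_le _ _)

end UniformConvergenceInMeasure

theorem MeasureTheory.TendstoInMeasure.comp_continuous {Ω E F : Type*} [MeasurableSpace Ω]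
    [PseudoMetricSpace E] [PseudoMetricSpace F] {P : Measure Ω} [IsFiniteMeasure P]
    {f : ℕ → Ω → E} {g : Ω → E}
    (hf : ∀ n, AEStronglyMeasurable (f n) P) {φ : E → F} (hφ : Continuous φ)
    (h : TendstoInMeasure P f atTop g) :
    TendstoInMeasure P (fun n ω => φ (f n ω)) atTop (fun ω => φ (g ω)) := by
  rw [exists_seq_tendstoInMeasure_atTop_iff fun n => hφ.comp_aestronglyMeasurable (hf n)]
  intro ns hns
  obtain ⟨ns', hns', hae⟩ := (exists_seq_tendstoInMeasure_atTop_iff hf).1 h ns hns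
  exact ⟨ns', hns', hae.mono fun ω hω => (hφ.tendsto _).comp hω⟩

lemma continuous_cdf (ν : Measure ℝ) [IsProbabilityMeasure ν] [NullSingletonClass ν] :
    Continuous (cdf ν) := by
  refine continuous_iff_continuousAt.2 fun x => ?_
  rw [(monotone_cdf ν).continuousAt_iff_leftLim_eq_rightLim, StieltjesFunction.rightLim_eq]
  have h := (cdf ν).measure_singleton x
  rw [measure_cdf, measure_singleton, eq_comm, ENNReal.ofReal_eq_zero] at h
  exact le_antisymm ((monotone_cdf ν).leftLim_le le_rfl) (by linarith)

lemma one_sub_cdf_eq_measureReal_Ici (ν : Measure ℝ) [IsProbabilityMeasure ν]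
    [NullSingletonClass ν] (r : ℝ) : 1 - cdf ν r = ν.real (Ici r) := by
  rw [cdf_eq_real, ← measureReal_congr (Ioi_ae_eq_Ici (μ := ν)), ← compl_Iic,
    measureReal_compl measurableSet_Iic, probReal_univ]

noncomputable def empiricalSurvival (Y : ℕ → ℝ) (N : ℕ) (r : ℝ) : ℝ :=
  (((Finset.range N).filter fun i => r ≤ Y i).card : ℝ) / N

section EmpiricalSurvival

variable (Y : ℕ → ℝ) (N : ℕ)

lemma antitone_empiricalSurvival : Antitone (empiricalSurvival Y N) := by
  intro u v huv
  unfold empiricalSurvival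
  gcongr

lemma empiricalSurvival_nonneg (r : ℝ) : 0 ≤ empiricalSurvival Y N r := by
  unfold empiricalSurvival
  positivity

lemma empiricalSurvival_le_one (r : ℝ) : empiricalSurvival Y N r ≤ 1 := by
  unfold empiricalSurvival
  rcases Nat.eq_zero_or_pos N with rfl | hN
  · simp
  · rw [div_le_one (by exact_mod_cast hN)]
    exact_mod_cast (Finset.card_filter_le _ _).trans_eq (Finset.card_range N)

end EmpiricalSurvival

section StrongLaw

variable {Ω α : Type*} [MeasurableSpace Ω] [MeasurableSpace α] {P : Measure Ω}
  [IsFiniteMeasure P] {μ : Measure α} {Z : ℕ → Ω → α}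

theorem ae_tendsto_card_filter_div (hZ : ∀ i, Measurable (Z i)) (hind : iIndepFun Z P)
    (hlaw : ∀ i, P.map (Z i) = μ) {p : α → Prop} [DecidablePred p] (hp : MeasurableSet {x | p x}) :
    ∀ᵐ ω ∂P, Tendsto (fun N : ℕ => (((Finset.range N).filter fun i => p (Z i ω)).card : ℝ) / N)
      atTop (𝓝 (μ.real {x | p x})) := by
  set g : α → ℝ := {x | p x}.indicator 1
  have hg : Measurable g := measurable_one.indicator hp
  have hint : Integrable (g ∘ Z 0) P := by
    rw [← integrable_map_measure hg.aestronglyMeasurable (hZ 0).aemeasurable]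
    exact (integrable_const 1).indicator hp
  have hident (i : ℕ) : IdentDistrib (g ∘ Z i) (g ∘ Z 0) P P :=
    IdentDistrib.comp ⟨(hZ i).aemeasurable, (hZ 0).aemeasurable, by rw [hlaw i, hlaw 0]⟩ hg
  have hmean : P[g ∘ Z 0] = μ.real {x | p x} := by
    rw [← integral_indicator_one hp, ← hlaw 0,
      integral_map (hZ 0).aemeasurable hg.aestronglyMeasurable]
    rfl
  filter_upwards [strong_law_ae_real (fun i => g ∘ Z i) hint
    (fun i j hij => (hind.comp (fun _ => g) fun _ => hg).indepFun hij) hident] with ω hω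
  rw [hmean] at hω
  convert hω using 3 with N
  rw [Finset.natCast_card_filter]
  simp [g, indicator]

theorem tendstoInMeasure_empiricalSurvival (hZ : ∀ i, Measurable (Z i)) (hind : iIndepFun Z P)
    (hlaw : ∀ i, P.map (Z i) = μ) {T : α → ℝ} (hT : Measurable T) {Nn : ℕ → ℕ}
    (hNn : Tendsto Nn atTop atTop) (r : ℝ) :
    TendstoInMeasure P (fun n ω => empiricalSurvival (fun i => T (Z i ω)) (Nn n) r) atTop
      (fun _ => μ.real {x | r ≤ T x}) := by
  refine tendstoInMeasure_of_tendsto_ae (fun n => Measurable.aestronglyMeasurable ?_)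
    ((ae_tendsto_card_filter_div hZ hind hlaw (hT measurableSet_Ici)).mono fun ω h => h.comp hNn)
  unfold empiricalSurvival
  simp_rw [Finset.natCast_card_filter]
  exact Finset.measurable_sum _ (fun i _ => Measurable.ite ((hT.comp (hZ i)) measurableSet_Ici)
    measurable_const measurable_const) |>.div_const _

end StrongLaw

theorem stmt17_general {Ω 𝓧 : Type*} [MeasurableSpace Ω] [MeasurableSpace 𝓧]
    (P : Measure Ω) [IsProbabilityMeasure P]
    (μ : Measure 𝓧) [IsProbabilityMeasure μ]
    (X : Ω → 𝓧)
    (T0 : 𝓧 → ℝ) (hT0 : Measurable T0)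
    (hcont : ∀ c : ℝ, μ {x | T0 x = c} = 0)
    (Tn : ℕ → Ω → ℝ) (hTnmeas : ∀ n, Measurable (Tn n))
    (hTn : TendstoInMeasure P Tn atTop (fun ω => T0 (X ω)))
    (Z : ℕ → Ω → 𝓧) (hZmeas : ∀ i, Measurable (Z i))
    (hZiid : iIndepFun Z P)
    (hZlaw : ∀ i, Measure.map (Z i) P = μ)
    (Nn : ℕ → ℕ) (hNn : Tendsto Nn atTop atTop)
    (Fhat : ℕ → Ω → ℝ → ℝ)
    (hFhat : ∀ n ω r, Fhat n ω r =
      (((Finset.range (Nn n)).filter fun i => r ≤ T0 (Z i ω)).card : ℝ) / (Nn n))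
    (F : ℝ → ℝ) (hF : ∀ r, F r = (μ {x | r ≤ T0 x}).toReal) :
    TendstoInMeasure P (fun n ω => Fhat n ω (Tn n ω)) atTop
      (fun ω => F (T0 (X ω))) := by
  obtain rfl : Fhat = fun n ω => empiricalSurvival (fun i => T0 (Z i ω)) (Nn n) :=
    funext fun n => funext fun ω => funext (hFhat n ω)
  set ν := μ.map T0
  have : IsProbabilityMeasure ν := Measure.isProbabilityMeasure_map hT0.aemeasurable
  have : NullSingletonClass ν :=
    ⟨fun c => by rw [Measure.map_apply hT0 (measurableSet_singleton c)]; exact hcont c⟩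
  have hsurv (r : ℝ) : μ.real {x | r ≤ T0 x} = 1 - cdf ν r := by
    rw [one_sub_cdf_eq_measureReal_Ici, map_measureReal_apply hT0 measurableSet_Ici]
    rfl
  obtain rfl : F = fun r => 1 - cdf ν r := funext fun r => (hF r).trans (hsurv r)
  have hHc : Continuous fun r => 1 - cdf ν r := continuous_const.sub (continuous_cdf ν)
  have hunif := tendstoUniformlyInMeasure_of_antitone
    (fun n ω => antitone_empiricalSurvival _ _) (fun n ω => empiricalSurvival_nonneg _ _)
    (fun n ω => empiricalSurvival_le_one _ _) (fun a b h => sub_le_sub_left (monotone_cdf ν h) 1)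
    hHc (by simpa using (tendsto_cdf_atBot ν).const_sub 1)
    (by simpa using (tendsto_cdf_atTop ν).const_sub 1)
    fun r => by simpa only [hsurv] using
      tendstoInMeasure_empiricalSurvival hZmeas hZiid hZlaw hT0 hNn r
  exact hunif.tendstoInMeasure_comp
    (hTn.comp_continuous (fun n => (hTnmeas n).aestronglyMeasurable) hHc)

/-- empirical survival function evaluated at a consistent
statistic converges in probability to the oracle p-value. -/
theorem stmt17 {Ω 𝓧 : Type*} [MeasurableSpace Ω] [MeasurableSpace 𝓧]
    (P : Measure Ω) [IsProbabilityMeasure P]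
    (μ : Measure 𝓧) [IsProbabilityMeasure μ]
    (X : Ω → 𝓧) (hX : Measurable X) (hXlaw : Measure.map X P = μ)
    (T0 : 𝓧 → ℝ) (hT0 : Measurable T0)
    (hcont : ∀ c : ℝ, μ {x | T0 x = c} = 0)
    (Tn : ℕ → Ω → ℝ) (hTnmeas : ∀ n, Measurable (Tn n))
    (hTn : TendstoInMeasure P Tn atTop (fun ω => T0 (X ω)))
    (Z : ℕ → Ω → 𝓧) (hZmeas : ∀ i, Measurable (Z i))
    (hZiid : iIndepFun Z P)
    (hZlaw : ∀ i, Measure.map (Z i) P = μ)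
    (hindep : ∀ n, IndepFun (fun ω => (X ω, Tn n ω)) (fun ω i => Z i ω) P)
    (Nn : ℕ → ℕ) (hNn : Tendsto Nn atTop atTop)
    (Fhat : ℕ → Ω → ℝ → ℝ)
    (hFhat : ∀ n ω r, Fhat n ω r =
      (((Finset.range (Nn n)).filter fun i => r ≤ T0 (Z i ω)).card : ℝ) / (Nn n))
    (F : ℝ → ℝ) (hF : ∀ r, F r = (μ {x | r ≤ T0 x}).toReal) :
    TendstoInMeasure P (fun n ω => Fhat n ω (Tn n ω)) atTop
      (fun ω => F (T0 (X ω))) :=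
  stmt17_general P μ X T0 hT0 hcont Tn hTnmeas hTn Z hZmeas hZiid hZlaw Nn hNn Fhat hFhat F hF
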